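/- arXiv:1705.07160 — 2 statements merged into one kernel-verified Lean document; each statement's English description precedes it below -/
import Mathlib

section
/- Let n, d ≥ 2 and let C be a 2d-mode complex tensor on ℂ^n lying in S^d ℂ^n ⊗ S^d ℂ^n (symmetric separately in the first d and last d indices). Then the spectral norm satisfies ‖C‖_{∞,ℂ} = max{ Re⟨C, (⊗^d x)⊗(⊗^d y)⟩ : x,y ∈ ℂ^n, ‖x‖ = ‖y‖ = 1 }. -/
open scoped ComplexOrder

noncomputable section

/-- The Euclidean norm of a vector in `ℂ^k`. -/
def vnorm {k : ℕ} (x : Fin k → ℂ) : ℝ :=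
  Real.sqrt (∑ i, ‖x i‖ ^ 2)

/-- A symmetric `d`-mode tensor on `ℂ^n`. -/
def IsSymT {d n : ℕ} (S : (Fin d → Fin n) → ℂ) : Prop :=
  ∀ (ω : Equiv.Perm (Fin d)) (i : Fin d → Fin n), S (i ∘ ω) = S i

/-- A hermitian `2d`-mode tensor on `ℂ^n`. -/
def IsHermT {d n : ℕ} (A : (Fin d → Fin n) → (Fin d → Fin n) → ℂ) : Prop :=
  ∀ p q, A q p = (starRingEnd ℂ) (A p q)

/-- A bisymmetric `2d`-mode tensor on `ℂ^n`: symmetric separately in the first `d`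
and in the last `d` indices. -/
def IsBisymT {d n : ℕ} (A : (Fin d → Fin n) → (Fin d → Fin n) → ℂ) : Prop :=
  ∀ (σ τ : Equiv.Perm (Fin d)) (p q : Fin d → Fin n), A (p ∘ σ) (q ∘ τ) = A p q

/-- The trace of a `2d`-mode tensor, viewed as a matrix. -/
def traceT {d n : ℕ} (A : (Fin d → Fin n) → (Fin d → Fin n) → ℂ) : ℂ :=
  ∑ p, A p p

/-- The spectral norm of a `2d`-mode tensor `A` on `ℂ^n`:
`max {|⟨A, x₁⊗⋯⊗x_d⊗y₁⊗⋯⊗y_d⟩| : ‖x_j‖ = ‖y_j‖ = 1}`. -/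
def specNorm2 {d n : ℕ} (A : (Fin d → Fin n) → (Fin d → Fin n) → ℂ) : ℝ :=
  sSup {r : ℝ | ∃ (x y : Fin d → Fin n → ℂ),
    (∀ j, vnorm (x j) = 1) ∧ (∀ j, vnorm (y j) = 1) ∧
    r = ‖(∑ p, ∑ q, A p q *
      (starRingEnd ℂ) ((∏ j, x j (p j)) * (∏ j, y j (q j))))‖}

/-- The nuclear norm of a `2d`-mode tensor `A` on `ℂ^n`. -/
def nucNorm2 {d n : ℕ} (A : (Fin d → Fin n) → (Fin d → Fin n) → ℂ) : ℝ :=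
  sInf {r : ℝ | ∃ (m : ℕ) (x y : Fin m → Fin d → Fin n → ℂ),
    A = (fun p q => ∑ i, (∏ j, x i j (p j)) * (∏ j, y i j (q j))) ∧
    r = ∑ i, (∏ j, vnorm (x i j)) * (∏ j, vnorm (y i j))}

/-- A density tensor: hermitian positive semidefinite with trace one. -/
def IsDensity {d n : ℕ} (A : (Fin d → Fin n) → (Fin d → Fin n) → ℂ) : Prop :=
  (Matrix.of A).PosSemidef ∧ traceT A = 1

/-- A separable (density) tensor. -/
def Separable {d n : ℕ} (A : (Fin d → Fin n) → (Fin d → Fin n) → ℂ) : Prop :=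
  ∃ (r : ℕ) (p : Fin r → ℝ) (x : Fin r → Fin d → Fin n → ℂ),
    (∀ i j, vnorm (x i j) = 1) ∧ (∀ i, 0 ≤ p i) ∧ (∑ i, p i) = 1 ∧
    A = fun a b => ∑ i, (p i : ℂ) *
      ((∏ j, x i j (a j)) * ∏ j, (starRingEnd ℂ) (x i j (b j)))

/-!
By compactness the spectral norm `M` is attained, and rotating the phase of one slot makes the
value itself real: `⟨C, x₁ ⊗ ⋯ ⊗ y_d⟩ = M`. Among these maximizers take one for which
`‖x₁ + ⋯ + x_d‖ + ‖y₁ + ⋯ + y_d‖` is largest. Freezing all slots but `x_i, x_j` leaves a symmetric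
form, conjugate-linear in each argument, of the shape `(a, b) ↦ ⟪b, W a⟫` with `W` conjugate-linear.
The equality case of Cauchy–Schwarz turns `⟪x_j, W x_i⟫ = M` into `W x_i = M x_j` and
`W x_j = M x_i`, so `W e = M e` for a unit vector `e` on the real line through `x_i + x_j` (through
`I (x_i - x_j)` if `x_i = -x_j`). Putting `e` or `-e` into both slots keeps the value `M` and, since
`‖x_i + x_j‖ < 2` when `x_i ≠ x_j`, lengthens `x₁ + ⋯ + x_d`. So all `x_i` agree, and likewise
all `y_j`.
-/

open Complex ComplexConjugate Function
open scoped InnerProductSpace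

theorem Finset.sum_update_eq_sub_add {ι G : Type*} [Fintype ι] [DecidableEq ι] [AddCommGroup G]
    (f : ι → G) (i : ι) (b : G) : ∑ l, update f i b l = ∑ l, f l - f i + b := by
  rw [Finset.sum_update_of_mem (Finset.mem_univ i),
    ← Finset.sum_erase_add _ _ (Finset.mem_univ i), Finset.sdiff_singleton_eq_erase]
  abel

section ConjLinearSymmetric

variable {E : Type*} [NormedAddCommGroup E] [InnerProductSpace ℂ E]

theorem eq_smul_of_inner_eq_of_forall_norm_inner_le {v w : E} {M : ℝ} (hv : ‖v‖ = 1)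
    (hM : ∀ b : E, ‖b‖ = 1 → ‖⟪b, w⟫_ℂ‖ ≤ M) (hvw : ⟪v, w⟫_ℂ = M) : w = (M : ℂ) • v := by
  have hMw : M ≤ ‖w‖ := by
    have := norm_inner_le_norm (𝕜 := ℂ) v w
    rw [hvw, hv, one_mul, norm_real, Real.norm_eq_abs] at this
    exact (le_abs_self M).trans this
  have hwM : ‖w‖ ≤ M := by
    rcases eq_or_ne w 0 with rfl | hw
    · simpa using hM v hv
    · simpa [inner_smul_left, inner_self_eq_norm_sq_to_K, hw, sq] using
        hM _ (norm_smul_inv_norm (𝕜 := ℂ) hw)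
  have hnorm : ‖w‖ = M := le_antisymm hwM hMw
  have hCS : ⟪v, w⟫_ℂ = (‖v‖ : ℂ) * ‖w‖ := by rw [hvw, hv, hnorm]; simp
  simpa [hv, hnorm, eq_comm] using inner_eq_norm_mul_iff.mp hCS

variable {W : E → E}

theorem map_add_of_inner_symm (hW : ∀ a b, ⟪a, W b⟫_ℂ = ⟪b, W a⟫_ℂ) (a b : E) :
    W (a + b) = W a + W b :=
  ext_inner_left ℂ fun c => by rw [hW, inner_add_left, inner_add_right, hW a, hW b]

theorem map_smul_of_inner_symm (hW : ∀ a b, ⟪a, W b⟫_ℂ = ⟪b, W a⟫_ℂ) (z : ℂ) (a : E) :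
    W (z • a) = conj z • W a :=
  ext_inner_left ℂ fun c => by rw [hW, inner_smul_left, inner_smul_right, hW a]

theorem exists_fixed_unit_of_map_eq_swap (hW : ∀ a b, ⟪a, W b⟫_ℂ = ⟪b, W a⟫_ℂ) {M : ℝ}
    {u v : E} (hu : ‖u‖ = 1) (hv : ‖v‖ = 1) (hne : u ≠ v) (hWu : W u = (M : ℂ) • v)
    (hWv : W v = (M : ℂ) • u) :
    ∃ (e : E) (r : ℝ), ‖e‖ = 1 ∧ W e = (M : ℂ) • e ∧ |r| < 2 ∧ u + v = (r : ℂ) • e := by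
  have hlt : ‖u + v‖ < 2 := by
    have hpar := parallelogram_law_with_norm ℂ u v
    have hpos : 0 < ‖u - v‖ := norm_pos_iff.mpr (sub_ne_zero.mpr hne)
    rw [hu, hv] at hpar
    nlinarith [norm_nonneg (u + v)]
  rcases eq_or_ne (u + v) 0 with hs | hs
  · have hvu : v = -u := eq_neg_of_add_eq_zero_right hs
    refine ⟨I • u, 0, by simp [norm_smul, hu], ?_, by norm_num, by simp [hs]⟩
    rw [map_smul_of_inner_symm hW, hWu, hvu, conj_I]
    module
  · have hs' : (‖u + v‖ : ℂ) ≠ 0 := ofReal_ne_zero.mpr (norm_ne_zero_iff.mpr hs)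
    refine ⟨(‖u + v‖⁻¹ : ℂ) • (u + v), ‖u + v‖, norm_smul_inv_norm hs, ?_,
      by rwa [abs_of_nonneg (norm_nonneg _)], ?_⟩
    · rw [map_smul_of_inner_symm hW, map_add_of_inner_symm hW, hWu, hWv, map_inv₀, conj_ofReal]
      module
    · rw [smul_smul, mul_inv_cancel₀ hs', one_smul]

theorem exists_eq_or_eq_neg_norm_lt {e : E} (he : ‖e‖ = 1) (R : E) {r : ℝ} (hr : |r| < 2) :
    ∃ a, (a = e ∨ a = -e) ∧ ‖R + (r : ℂ) • e‖ < ‖R + a + a‖ := by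
  set ρ := re ⟪R, e⟫_ℂ
  have hsq : ∀ t : ℝ, ‖R + (t : ℂ) • e‖ ^ 2 = ‖R‖ ^ 2 + 2 * t * ρ + t ^ 2 := by
    intro t
    rw [norm_add_sq (𝕜 := ℂ), inner_smul_right, RCLike.re_to_complex, re_ofReal_mul, norm_smul,
      norm_real, he, Real.norm_eq_abs, mul_one, sq_abs]
    ring
  obtain ⟨hr₁, hr₂⟩ := abs_lt.mp hr
  rcases le_total 0 ρ with hρ | hρ
  · refine ⟨e, Or.inl rfl, lt_of_pow_lt_pow_left₀ 2 (norm_nonneg _) ?_⟩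
    rw [show R + e + e = R + ((2 : ℝ) : ℂ) • e by push_cast; rw [two_smul, add_assoc], hsq, hsq]
    nlinarith
  · refine ⟨-e, Or.inr rfl, lt_of_pow_lt_pow_left₀ 2 (norm_nonneg _) ?_⟩
    rw [show R + -e + -e = R + ((-2 : ℝ) : ℂ) • e by push_cast; rw [neg_smul, two_smul]; abel,
      hsq, hsq]
    nlinarith

theorem exists_norm_eq_one_inner_self_eq_of_inner_eq (hW : ∀ a b, ⟪a, W b⟫_ℂ = ⟪b, W a⟫_ℂ)
    {M : ℝ} (hM : ∀ a b, ‖a‖ = 1 → ‖b‖ = 1 → ‖⟪b, W a⟫_ℂ‖ ≤ M) {u v : E} (hu : ‖u‖ = 1)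
    (hv : ‖v‖ = 1) (huv : ⟪v, W u⟫_ℂ = M) (hne : u ≠ v) (R : E) :
    ∃ a, ‖a‖ = 1 ∧ ⟪a, W a⟫_ℂ = M ∧ ‖R + u + v‖ < ‖R + a + a‖ := by
  have hWu := eq_smul_of_inner_eq_of_forall_norm_inner_le hv (hM u · hu) huv
  have hWv := eq_smul_of_inner_eq_of_forall_norm_inner_le hu (hM v · hv) (by rw [hW, huv])
  obtain ⟨e, r, he, hWe, hr, hsum⟩ := exists_fixed_unit_of_map_eq_swap hW hu hv hne hWu hWv
  obtain ⟨a, hae, hlt⟩ := exists_eq_or_eq_neg_norm_lt he R hr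
  have hWa : W a = (M : ℂ) • a := by
    rcases hae with rfl | rfl
    · exact hWe
    · rw [← neg_one_smul ℂ e, map_smul_of_inner_symm hW, hWe, map_neg, map_one, smul_comm]
  refine ⟨a, by rcases hae with rfl | rfl <;> simp [he], ?_, by rwa [add_assoc, hsum]⟩
  rw [hWa, inner_smul_right, inner_self_eq_norm_sq_to_K]
  rcases hae with rfl | rfl <;> simp [he]

end ConjLinearSymmetric

section Pairing

variable {n d : ℕ}

def pairing (C : (Fin d → Fin n) → (Fin d → Fin n) → ℂ)
    (x y : Fin d → EuclideanSpace ℂ (Fin n)) : ℂ :=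
  ∑ p, ∑ q, C p q * conj ((∏ j, x j (p j)) * ∏ j, y j (q j))

theorem continuous_pairing (C : (Fin d → Fin n) → (Fin d → Fin n) → ℂ) :
    Continuous fun z : (Fin d → EuclideanSpace ℂ (Fin n)) × (Fin d → EuclideanSpace ℂ (Fin n)) =>
      pairing C z.1 z.2 := by
  unfold pairing
  fun_prop

def coordProd (p : Fin d → Fin n) :
    MultilinearMap ℂ (fun _ : Fin d => EuclideanSpace ℂ (Fin n)) ℂ :=
  (MultilinearMap.mkPiAlgebra ℂ (Fin d) ℂ).compLinearMap fun j =>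
    (EuclideanSpace.proj (p j) : EuclideanSpace ℂ (Fin n) →L[ℂ] ℂ).toLinearMap

theorem exists_inner_eq_pairing_update (C : (Fin d → Fin n) → (Fin d → Fin n) → ℂ)
    (x y : Fin d → EuclideanSpace ℂ (Fin n)) (i : Fin d) :
    ∃ w, ∀ b, pairing C (update x i b) y = ⟪b, w⟫_ℂ := by
  let L : EuclideanSpace ℂ (Fin n) →ₗ[ℂ] ℂ :=
    ∑ p, ∑ q, (conj (C p q) * ∏ j, y j (q j)) • (coordProd p).toLinearMap x i
  refine ⟨(InnerProductSpace.toDual ℂ _).symm (LinearMap.toContinuousLinearMap L), fun b => ?_⟩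
  rw [← inner_conj_symm, InnerProductSpace.toDual_symm_apply, LinearMap.coe_toContinuousLinearMap']
  simp only [pairing, map_mul, map_prod, coordProd, LinearMap.coe_sum, LinearMap.coe_smul,
    Finset.sum_apply, Pi.smul_apply, MultilinearMap.toLinearMap_apply,
    MultilinearMap.compLinearMap_apply, ContinuousLinearMap.coe_coe, PiLp.proj_apply,
    MultilinearMap.mkPiAlgebra_apply, smul_eq_mul, map_sum, RingHomCompTriple.comp_apply,
    RingHom.id_apply, L]
  refine Finset.sum_congr rfl fun p _ => Finset.sum_congr rfl fun q _ => ?_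
  ring

theorem pairing_comp_perm {C : (Fin d → Fin n) → (Fin d → Fin n) → ℂ}
    (hC : ∀ (σ : Equiv.Perm (Fin d)) p q, C (p ∘ σ) q = C p q)
    (x y : Fin d → EuclideanSpace ℂ (Fin n)) (σ : Equiv.Perm (Fin d)) :
    pairing C (x ∘ σ) y = pairing C x y := by
  unfold pairing
  refine Fintype.sum_equiv (Equiv.arrowCongr σ (Equiv.refl (Fin n))) _ _ fun p => ?_
  refine Finset.sum_congr rfl fun q _ => ?_
  have hp : Equiv.arrowCongr σ (Equiv.refl (Fin n)) p = p ∘ σ.symm := rfl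
  rw [hp, hC, ← Equiv.prod_comp σ (fun j => x j ((p ∘ σ.symm) j))]
  simp

theorem pairing_update_update_comm {C : (Fin d → Fin n) → (Fin d → Fin n) → ℂ}
    (hC : ∀ (σ : Equiv.Perm (Fin d)) p q, C (p ∘ σ) q = C p q)
    (x y : Fin d → EuclideanSpace ℂ (Fin n)) {i j : Fin d} (hij : i ≠ j) (a b) :
    pairing C (update (update x i a) j b) y = pairing C (update (update x i b) j a) y := by
  rw [← pairing_comp_perm hC _ y (Equiv.swap i j)]
  congr 1
  funext k
  simp only [comp_apply, update_apply, Equiv.swap_apply_def]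
  split_ifs <;> simp_all

theorem pairing_flip (C : (Fin d → Fin n) → (Fin d → Fin n) → ℂ)
    (x y : Fin d → EuclideanSpace ℂ (Fin n)) :
    pairing C x y = pairing (fun p q => C q p) y x := by
  unfold pairing
  rw [Finset.sum_comm]
  refine Finset.sum_congr rfl fun q _ => Finset.sum_congr rfl fun p _ => ?_
  beta_reduce
  rw [mul_comm (∏ j, y j (q j))]

end Pairing

section UnitFamilies

variable {n d : ℕ}

def unitFamilies (d n : ℕ) : Set (Fin d → EuclideanSpace ℂ (Fin n)) :=
  Set.univ.pi fun _ => Metric.sphere 0 1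

theorem mem_unitFamilies {x : Fin d → EuclideanSpace ℂ (Fin n)} :
    x ∈ unitFamilies d n ↔ ∀ j, ‖x j‖ = 1 := by
  simp [unitFamilies]

theorem update_mem_unitFamilies {x : Fin d → EuclideanSpace ℂ (Fin n)}
    (hx : x ∈ unitFamilies d n) (i : Fin d) {a : EuclideanSpace ℂ (Fin n)} (ha : ‖a‖ = 1) :
    update x i a ∈ unitFamilies d n := by
  rw [mem_unitFamilies] at hx ⊢
  intro j
  rcases eq_or_ne j i with rfl | hj
  · rwa [update_self]
  · rw [update_of_ne hj]; exact hx j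

theorem isCompact_unitFamilies : IsCompact (unitFamilies d n) :=
  isCompact_univ_pi fun _ => isCompact_sphere 0 1

theorem exists_pairing_eq_norm_sum_lt {C : (Fin d → Fin n) → (Fin d → Fin n) → ℂ}
    (hC : ∀ (σ : Equiv.Perm (Fin d)) p q, C (p ∘ σ) q = C p q) {M : ℝ}
    {x y : Fin d → EuclideanSpace ℂ (Fin n)}
    (hM : ∀ x' ∈ unitFamilies d n, ‖pairing C x' y‖ ≤ M) (hx : x ∈ unitFamilies d n)
    (hxy : pairing C x y = M) {i j : Fin d} (hij : i ≠ j) (hne : x i ≠ x j) :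
    ∃ x' ∈ unitFamilies d n, pairing C x' y = M ∧ ‖∑ l, x l‖ < ‖∑ l, x' l‖ := by
  choose W hW using fun a => exists_inner_eq_pairing_update C (update x i a) y j
  have hsymm : ∀ a b, ⟪a, W b⟫_ℂ = ⟪b, W a⟫_ℂ := fun a b => by
    rw [← hW, ← hW, pairing_update_update_comm hC x y hij]
  have hunit : ∀ a b : EuclideanSpace ℂ (Fin n), ‖a‖ = 1 → ‖b‖ = 1 →
      update (update x i a) j b ∈ unitFamilies d n := fun a b ha hb =>
    update_mem_unitFamilies (update_mem_unitFamilies hx i ha) j hb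
  rw [mem_unitFamilies] at hx
  obtain ⟨a, ha, haa, hlt⟩ := exists_norm_eq_one_inner_self_eq_of_inner_eq hsymm
    (fun a b ha hb => hW a b ▸ hM _ (hunit a b ha hb)) (hx i) (hx j)
    (by rw [← hW, update_eq_self, update_eq_self, hxy]) hne (∑ l, x l - x i - x j)
  refine ⟨update (update x i a) j a, hunit a a ha ha, by rw [hW, haa], ?_⟩
  rw [Finset.sum_update_eq_sub_add, Finset.sum_update_eq_sub_add, update_of_ne hij.symm]
  calc ‖∑ l, x l‖ = ‖∑ l, x l - x i - x j + x i + x j‖ := by congr 1; abel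
    _ < _ := hlt
    _ = _ := by congr 1; abel

end UnitFamilies

section SpectralNorm

variable {n d : ℕ}

theorem vnorm_eq_norm (x : Fin n → ℂ) : vnorm x = ‖WithLp.toLp 2 x‖ := by
  rw [EuclideanSpace.norm_eq]
  rfl

theorem specNorm2_eq_sSup_image (C : (Fin d → Fin n) → (Fin d → Fin n) → ℂ) :
    specNorm2 C =
      sSup ((fun z => ‖pairing C z.1 z.2‖) '' (unitFamilies d n ×ˢ unitFamilies d n)) := by
  unfold specNorm2
  congr 1
  ext r
  simp only [Set.mem_ofPred_eq, Set.mem_image, Set.mem_prod, Prod.exists, mem_unitFamilies,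
    vnorm_eq_norm]
  constructor
  · rintro ⟨x, y, hx, hy, rfl⟩
    exact ⟨fun j => WithLp.toLp 2 (x j), fun j => WithLp.toLp 2 (y j), ⟨hx, hy⟩, rfl⟩
  · rintro ⟨x, y, ⟨hx, hy⟩, rfl⟩
    exact ⟨fun j => WithLp.ofLp (x j), fun j => WithLp.ofLp (y j), hx, hy, rfl⟩

theorem isCompact_image_norm_pairing (C : (Fin d → Fin n) → (Fin d → Fin n) → ℂ) :
    IsCompact ((fun z => ‖pairing C z.1 z.2‖) '' (unitFamilies d n ×ˢ unitFamilies d n)) :=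
  (isCompact_unitFamilies.prod isCompact_unitFamilies).image
    (continuous_norm.comp (continuous_pairing C))

theorem norm_pairing_le_specNorm2 (C : (Fin d → Fin n) → (Fin d → Fin n) → ℂ)
    {x y : Fin d → EuclideanSpace ℂ (Fin n)} (hx : x ∈ unitFamilies d n)
    (hy : y ∈ unitFamilies d n) : ‖pairing C x y‖ ≤ specNorm2 C := by
  rw [specNorm2_eq_sSup_image]
  exact le_csSup (isCompact_image_norm_pairing C).bddAbove ⟨(x, y), ⟨hx, hy⟩, rfl⟩

theorem exists_norm_pairing_eq_specNorm2 (hn : 0 < n)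
    (C : (Fin d → Fin n) → (Fin d → Fin n) → ℂ) :
    ∃ x ∈ unitFamilies d n, ∃ y ∈ unitFamilies d n, ‖pairing C x y‖ = specNorm2 C := by
  have hne : (unitFamilies d n).Nonempty :=
    ⟨fun _ => EuclideanSpace.single ⟨0, hn⟩ 1, by simp [mem_unitFamilies]⟩
  obtain ⟨⟨x, y⟩, ⟨hx, hy⟩, hxy⟩ :=
    (isCompact_image_norm_pairing C).sSup_mem ((hne.prod hne).image _)
  rw [specNorm2_eq_sSup_image]
  exact ⟨x, hx, y, hy, hxy⟩

theorem exists_pairing_update_smul_eq_norm (C : (Fin d → Fin n) → (Fin d → Fin n) → ℂ)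
    (x y : Fin d → EuclideanSpace ℂ (Fin n)) (i : Fin d) :
    ∃ c : ℂ, ‖c‖ = 1 ∧ pairing C (update x i (c • x i)) y = ‖pairing C x y‖ := by
  obtain ⟨w, hw⟩ := exists_inner_eq_pairing_update C x y i
  set P := pairing C x y
  set c := exp (arg P * I)
  refine ⟨c, norm_exp_ofReal_mul_I _, ?_⟩
  calc pairing C (update x i (c • x i)) y = conj c * P := by
        rw [hw, inner_smul_left, ← hw, update_eq_self]
    _ = conj c * (‖P‖ * c) := by rw [norm_mul_exp_arg_mul_I]
    _ = ‖P‖ := by rw [mul_left_comm, conj_mul', norm_exp_ofReal_mul_I]; simp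

theorem eq_of_forall_norm_sum_le {C : (Fin d → Fin n) → (Fin d → Fin n) → ℂ}
    (hC : ∀ (σ : Equiv.Perm (Fin d)) p q, C (p ∘ σ) q = C p q) {M : ℝ}
    {x y : Fin d → EuclideanSpace ℂ (Fin n)}
    (hM : ∀ x' ∈ unitFamilies d n, ‖pairing C x' y‖ ≤ M) (hx : x ∈ unitFamilies d n)
    (hxy : pairing C x y = M)
    (hmax : ∀ x' ∈ unitFamilies d n, pairing C x' y = M → ‖∑ l, x' l‖ ≤ ‖∑ l, x l‖)
    (i j : Fin d) : x i = x j := by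
  by_contra hne
  obtain ⟨x', hx', hx'y, hlt⟩ :=
    exists_pairing_eq_norm_sum_lt hC hM hx hxy (ne_of_apply_ne x hne) hne
  exact (hmax x' hx' hx'y).not_gt hlt

theorem exists_symmetric_maximizer (hd : 0 < d) (hn : 0 < n)
    {C : (Fin d → Fin n) → (Fin d → Fin n) → ℂ} (hC : IsBisymT C) :
    ∃ x y : EuclideanSpace ℂ (Fin n), ‖x‖ = 1 ∧ ‖y‖ = 1 ∧
      pairing C (fun _ => x) (fun _ => y) = specNorm2 C := by
  set i₀ : Fin d := ⟨0, hd⟩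
  obtain ⟨x₀, hx₀, y₀, hy₀, hM₀⟩ := exists_norm_pairing_eq_specNorm2 hn C
  obtain ⟨c, hc, hc₀⟩ := exists_pairing_update_smul_eq_norm C x₀ y₀ i₀
  set K := (unitFamilies d n ×ˢ unitFamilies d n) ∩ {z | pairing C z.1 z.2 = specNorm2 C}
  have hK : IsCompact K := (isCompact_unitFamilies.prod isCompact_unitFamilies).inter_right
    (isClosed_eq (continuous_pairing C) continuous_const)
  have hKne : K.Nonempty := ⟨(update x₀ i₀ (c • x₀ i₀), y₀),
    ⟨update_mem_unitFamilies hx₀ i₀ (by rw [norm_smul, hc, one_mul, mem_unitFamilies.mp hx₀]),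
      hy₀⟩, hc₀.trans (congrArg _ hM₀)⟩
  obtain ⟨⟨x, y⟩, ⟨⟨hx, hy⟩, hxy⟩, hmax⟩ :=
    hK.exists_isMaxOn hKne (f := fun z => ‖∑ l, z.1 l‖ + ‖∑ l, z.2 l‖) (by fun_prop)
  have hx_const := eq_of_forall_norm_sum_le (fun σ p q => hC σ 1 p q)
    (fun x' hx' => norm_pairing_le_specNorm2 C hx' hy) hx hxy
    (fun x' hx' hx'y => by simpa using hmax (a := (x', y)) ⟨⟨hx', hy⟩, hx'y⟩)
  have hy_const := eq_of_forall_norm_sum_le (C := fun p q => C q p)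
    (fun σ p q => by simpa using hC 1 σ q p)
    (fun y' hy' => pairing_flip C x y' ▸ norm_pairing_le_specNorm2 C hx hy')
    hy (pairing_flip C x y ▸ hxy)
    (fun y' hy' hy'x => by
      simpa using hmax (a := (x, y')) ⟨⟨hx, hy'⟩, (pairing_flip C x y').trans hy'x⟩)
  refine ⟨x i₀, y i₀, mem_unitFamilies.mp hx i₀, mem_unitFamilies.mp hy i₀, ?_⟩
  rwa [show (fun _ => x i₀) = x from funext fun l => hx_const i₀ l,
    show (fun _ => y i₀) = y from funext fun l => hy_const i₀ l]

end SpectralNorm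

/-- For a bisymmetric `2d`-mode tensor `C` on `ℂ^n`, the spectral norm
is attained on symmetric rank-one tensors:
`‖C‖_∞ = max { Re⟨C, (⊗^d x)⊗(⊗^d y)⟩ : ‖x‖ = ‖y‖ = 1 }`. -/
theorem stmt10 (n d : ℕ) (hn : 2 ≤ n) (hd : 2 ≤ d)
    (C : (Fin d → Fin n) → (Fin d → Fin n) → ℂ) (hC : IsBisymT C) :
    specNorm2 C = sSup {r : ℝ | ∃ x y : Fin n → ℂ, vnorm x = 1 ∧ vnorm y = 1 ∧
      r = (∑ p, ∑ q, C p q *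
        (starRingEnd ℂ) ((∏ j, x (p j)) * (∏ j, y (q j)))).re} := by
  obtain ⟨x, y, hx, hy, hxy⟩ := exists_symmetric_maximizer (by omega) (by omega) hC
  refine (IsGreatest.csSup_eq ⟨?_, ?_⟩).symm
  · exact ⟨WithLp.ofLp x, WithLp.ofLp y, by rwa [vnorm_eq_norm], by rwa [vnorm_eq_norm],
      (congrArg re hxy).symm⟩
  rintro r ⟨x', y', hx', hy', rfl⟩
  have hunit : ∀ v : Fin n → ℂ, vnorm v = 1 →
      (fun _ => WithLp.toLp 2 v : Fin d → EuclideanSpace ℂ (Fin n)) ∈ unitFamilies d n :=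
    fun v hv => mem_unitFamilies.mpr fun _ => by rwa [← vnorm_eq_norm]
  exact (re_le_norm _).trans (norm_pairing_le_specNorm2 C (hunit x' hx') (hunit y' hy'))
end
end

section
/- Let n, d ≥ 2 and let A be a hermitian bisymmetric 2d-mode tensor on ℂ^n which is a density tensor. The following are equivalent: (1) A is separable; (2) ‖A‖_{1,ℂ} = 1; (3) A = Σ_{i=1}^r p_i (⊗^d x_i)⊗(⊗^d conj(x_i)) for some unit vectors x_i ∈ ℂ^n and p_i > 0 with Σ_i p_i = 1. -/
/-!
A rank-one decomposition `A = ∑ᵢ Xᵢ ⊗ Yᵢ` (with `Xᵢ`, `Yᵢ` pure tensors) costs at least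
`|tr A| = 1`, because the trace is the sum of the bilinear pairings `∑ₚ Xᵢ p Yᵢ p`; a separable
decomposition costs exactly `1`. Conversely, if `‖A‖₁ = 1`, compactness of the convex hull of the
pure tensors with factors in the unit ball puts `A` in that hull: `A = ∑ᵢ wᵢ Xᵢ ⊗ Yᵢ`.
Bisymmetry gives `∑ₚ A (p ∘ σ) p = tr A = 1` for every permutation `σ`, and on the unit ball
`Re ∑ₚ X (p ∘ σ) Y p ≤ 1` with equality only for `Y = conj (X ∘ σ)`. Hence `Yᵢ = conj Xᵢ` and every
`Xᵢ` is a symmetric pure tensor of norm one, i.e. a unimodular multiple of `⊗^d u`.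
-/

open scoped ComplexOrder

noncomputable section


open Finset ComplexConjugate

section L2Norm

variable {κ : Type*} [Fintype κ]

def l2norm (x : κ → ℂ) : ℝ :=
  √(∑ i, ‖x i‖ ^ 2)

lemma l2norm_eq_norm_toLp (x : κ → ℂ) : l2norm x = ‖(WithLp.toLp 2 x : EuclideanSpace ℂ κ)‖ :=
  (EuclideanSpace.norm_eq _).symm

lemma vnorm_eq_l2norm {k : ℕ} (x : Fin k → ℂ) : vnorm x = l2norm x := rfl

lemma l2norm_nonneg (x : κ → ℂ) : 0 ≤ l2norm x := Real.sqrt_nonneg _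

lemma sq_l2norm (x : κ → ℂ) : l2norm x ^ 2 = ∑ i, ‖x i‖ ^ 2 :=
  Real.sq_sqrt (sum_nonneg fun _ _ => sq_nonneg _)

lemma norm_le_l2norm (x : κ → ℂ) (i : κ) : ‖x i‖ ≤ l2norm x :=
  Real.le_sqrt_of_sq_le (single_le_sum (fun j _ => sq_nonneg ‖x j‖) (mem_univ i))

lemma l2norm_eq_zero {x : κ → ℂ} : l2norm x = 0 ↔ x = 0 := by
  rw [l2norm_eq_norm_toLp, norm_eq_zero, WithLp.toLp_eq_zero]

lemma l2norm_smul (c : ℂ) (x : κ → ℂ) : l2norm (c • x) = ‖c‖ * l2norm x := by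
  rw [l2norm_eq_norm_toLp, l2norm_eq_norm_toLp, WithLp.toLp_smul, norm_smul]

lemma l2norm_conj (x : κ → ℂ) : l2norm (fun i => conj (x i)) = l2norm x := by
  simp only [l2norm, RCLike.norm_conj]

lemma continuous_l2norm : Continuous (l2norm (κ := κ)) := by
  unfold l2norm; fun_prop

lemma norm_sum_mul_le_l2norm_mul (x y : κ → ℂ) : ‖∑ i, x i * y i‖ ≤ l2norm x * l2norm y :=
  calc ‖∑ i, x i * y i‖ ≤ ∑ i, ‖x i‖ * ‖y i‖ := by
        simpa only [norm_mul] using norm_sum_le univ (fun i => x i * y i)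
    _ ≤ l2norm x * l2norm y := by
        simpa only [l2norm, Real.sqrt_mul_self_eq_abs] using
          Real.sum_mul_le_sqrt_mul_sqrt univ (fun i => ‖x i‖) (fun i => ‖y i‖)

lemma sum_norm_sub_conj_sq (x y : κ → ℂ) :
    ∑ i, ‖y i - conj (x i)‖ ^ 2 = l2norm y ^ 2 + l2norm x ^ 2 - 2 * (∑ i, x i * y i).re := by
  simp only [sq_l2norm, Complex.re_sum, ← sum_add_distrib, mul_sum, ← sum_sub_distrib]
  refine sum_congr rfl fun i _ => ?_
  simp only [Complex.sq_norm, Complex.normSq_apply, Complex.sub_re, Complex.sub_im,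
    Complex.mul_re, Complex.conj_re, Complex.conj_im]
  ring

end L2Norm

section PureTensor

variable {ι α : Type*} [Fintype ι]

def pureTensor {R : Type*} [CommMonoid R] (x : ι → α → R) (p : ι → α) : R :=
  ∏ i, x i (p i)

lemma pureTensor_smul {R : Type*} [CommMonoid R] (c : ι → R) (x : ι → α → R) :
    pureTensor (fun i => c i • x i) = (∏ i, c i) • pureTensor x := by
  funext p
  simp only [pureTensor, Pi.smul_apply, smul_eq_mul, prod_mul_distrib]

lemma pureTensor_update {R : Type*} [CommMonoid R] [DecidableEq ι] (x : ι → α → R)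
    (p : ι → α) (i : ι) (k : α) :
    pureTensor x (Function.update p i k) = x i k * ∏ j ∈ univ.erase i, x j (p j) := by
  rw [pureTensor, ← mul_prod_erase univ _ (mem_univ i), Function.update_self]
  congr 1
  exact prod_congr rfl fun j hj => by rw [Function.update_of_ne (ne_of_mem_erase hj)]

lemma l2norm_pureTensor [DecidableEq ι] [Fintype α] (x : ι → α → ℂ) :
    l2norm (pureTensor x) = ∏ i, l2norm (x i) := by
  calc l2norm (pureTensor x) = √(∏ i, l2norm (x i) ^ 2) := by
        rw [l2norm]
        simp only [sq_l2norm, Fintype.prod_sum, pureTensor, norm_prod, prod_pow]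
    _ = ∏ i, l2norm (x i) := by
        rw [prod_pow, Real.sqrt_sq (prod_nonneg fun i _ => l2norm_nonneg (x i))]

lemma l2norm_comp_perm [DecidableEq ι] [Fintype α] (X : (ι → α) → ℂ) (σ : Equiv.Perm ι) :
    l2norm (fun p => X (p ∘ σ)) = l2norm X := by
  unfold l2norm
  rw [Fintype.sum_equiv (σ.symm.arrowCongr (Equiv.refl α)) (fun p => ‖X (p ∘ σ)‖ ^ 2)
    (fun p => ‖X p‖ ^ 2) fun _ => rfl]

lemma exists_smul_of_pureTensor_eq {K : Type*} [Field K] [DecidableEq ι] {x y : ι → α → K}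
    (h : pureTensor y = pureTensor x) {p : ι → α} (hp : pureTensor x p ≠ 0) (i : ι) :
    ∃ c : K, y i = c • x i := by
  have hR' : ∏ j ∈ univ.erase i, y j (p j) ≠ 0 := by
    intro h0
    apply hp
    rw [← h, ← Function.update_eq_self i p, pureTensor_update, h0, mul_zero]
  refine ⟨(∏ j ∈ univ.erase i, x j (p j)) / ∏ j ∈ univ.erase i, y j (p j), funext fun k => ?_⟩
  have hk := congrFun h (Function.update p i k)
  rw [pureTensor_update, pureTensor_update] at hk
  rw [Pi.smul_apply, smul_eq_mul, div_mul_eq_mul_div, eq_div_iff hR']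
  linear_combination hk

end PureTensor

/-- Swapping the factors `i₀` and `i` does not change the tensor, so every factor is a multiple
of the normalised factor `i₀`. -/
lemma exists_eq_smul_pureTensor_const_of_isSymT {d n : ℕ} (hd : 0 < d)
    {x : Fin d → Fin n → ℂ} (hsym : IsSymT (pureTensor x)) (hx : pureTensor x ≠ 0) :
    ∃ (u : Fin n → ℂ) (c : ℂ), l2norm u = 1 ∧ pureTensor x = c • pureTensor (fun _ => u) := by
  obtain ⟨p, hp⟩ := Function.ne_iff.1 hx
  set i₀ : Fin d := ⟨0, hd⟩
  have hx₀ : l2norm (x i₀) ≠ 0 := by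
    refine l2norm_eq_zero.not.2 fun h => hp (prod_eq_zero (mem_univ i₀) ?_)
    rw [h, Pi.zero_apply]
  set u := (l2norm (x i₀) : ℂ)⁻¹ • x i₀
  have hfactor : ∀ i, ∃ c : ℂ, x i = c • u := by
    intro i
    have hswap : pureTensor (fun j => x (Equiv.swap i₀ i j)) = pureTensor x := by
      funext q
      rw [← hsym (Equiv.swap i₀ i) q]
      simpa [pureTensor] using
        Equiv.prod_comp (Equiv.swap i₀ i) fun j => x j (q (Equiv.swap i₀ i j))
    obtain ⟨c, hc⟩ := exists_smul_of_pureTensor_eq hswap hp i₀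
    refine ⟨c * l2norm (x i₀), ?_⟩
    rw [Equiv.swap_apply_left] at hc
    rw [hc, smul_smul, mul_assoc, mul_inv_cancel₀ (Complex.ofReal_ne_zero.2 hx₀), mul_one]
  choose c hc using hfactor
  refine ⟨u, ∏ i, c i, ?_, ?_⟩
  · rw [l2norm_smul, norm_inv, Complex.norm_real, Real.norm_of_nonneg (l2norm_nonneg _),
      inv_mul_cancel₀ hx₀]
  · rw [← pureTensor_smul]
    exact congrArg pureTensor (funext hc)

/-- By `sum_norm_sub_conj_sq`, `Re ∑ₚ Xₚ Yₚ ≤ 1` on the unit ball, with equality only if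
`‖X‖ = 1` and `Y = conj X`. -/
lemma l2norm_eq_one_and_eq_conj_of_sum_mul_dot_eq_one {ι κ : Type*} [Fintype ι] [Fintype κ]
    {w : ι → ℝ} (hw : ∀ i, 0 < w i) (hw1 : ∑ i, w i = 1) {X Y : ι → κ → ℂ}
    (hX : ∀ i, l2norm (X i) ≤ 1) (hY : ∀ i, l2norm (Y i) ≤ 1)
    (h : ∑ i, (w i : ℂ) * ∑ p, X i p * Y i p = 1) (i : ι) :
    l2norm (X i) = 1 ∧ Y i = fun p => conj (X i p) := by
  set D : ι → ℝ := fun i => ∑ p, ‖Y i p - conj (X i p)‖ ^ 2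
  set g : ι → ℝ := fun i => D i + (1 - l2norm (Y i) ^ 2) + (1 - l2norm (X i) ^ 2)
  have hD : ∀ i, 0 ≤ D i := fun i => sum_nonneg fun p _ => sq_nonneg _
  have hgap : ∀ i, 0 ≤ 1 - l2norm (X i) ^ 2 ∧ 0 ≤ 1 - l2norm (Y i) ^ 2 := fun i =>
    ⟨by nlinarith [hX i, l2norm_nonneg (X i)], by nlinarith [hY i, l2norm_nonneg (Y i)]⟩
  have hg : ∑ i, w i * g i = 0 := by
    have hre := congrArg Complex.re h
    rw [Complex.re_sum, Complex.one_re] at hre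
    simp only [Complex.re_ofReal_mul] at hre
    simp only [g, D, sum_norm_sub_conj_sq]
    calc ∑ i, w i * (l2norm (Y i) ^ 2 + l2norm (X i) ^ 2 - 2 * (∑ p, X i p * Y i p).re +
          (1 - l2norm (Y i) ^ 2) + (1 - l2norm (X i) ^ 2))
        = 2 * ∑ i, w i - 2 * ∑ i, w i * (∑ p, X i p * Y i p).re := by
          rw [mul_sum, mul_sum, ← sum_sub_distrib]
          exact sum_congr rfl fun i _ => by ring
      _ = 0 := by rw [hw1, hre]; ring
  have hgi : g i = 0 := by
    have := (sum_eq_zero_iff_of_nonneg fun j _ =>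
      mul_nonneg (hw j).le (by linarith [hD j, hgap j])).1 hg i (mem_univ i)
    exact (mul_eq_zero.1 this).resolve_left (hw i).ne'
  have hDi : D i = 0 := by linarith [hD i, hgap i]
  refine ⟨?_, funext fun p => ?_⟩
  · nlinarith [hD i, hgap i, hX i, l2norm_nonneg (X i)]
  · have := (sum_eq_zero_iff_of_nonneg fun q _ => sq_nonneg _).1 hDi p (mem_univ p)
    rwa [sq_eq_zero_iff, norm_eq_zero, sub_eq_zero] at this

section NuclearNorm

variable {d n : ℕ}

def nucCosts (A : (Fin d → Fin n) → (Fin d → Fin n) → ℂ) : Set ℝ :=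
  {r : ℝ | ∃ (m : ℕ) (x y : Fin m → Fin d → Fin n → ℂ),
    A = (fun p q => ∑ i, (∏ j, x i j (p j)) * (∏ j, y i j (q j))) ∧
    r = ∑ i, (∏ j, vnorm (x i j)) * (∏ j, vnorm (y i j))}

lemma nucNorm2_eq_sInf_nucCosts (A : (Fin d → Fin n) → (Fin d → Fin n) → ℂ) :
    nucNorm2 A = sInf (nucCosts A) := rfl

lemma nonneg_of_mem_nucCosts {A : (Fin d → Fin n) → (Fin d → Fin n) → ℂ} {r : ℝ}
    (hr : r ∈ nucCosts A) : 0 ≤ r := by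
  obtain ⟨m, x, y, -, rfl⟩ := hr
  exact sum_nonneg fun i _ => mul_nonneg (prod_nonneg fun j _ => l2norm_nonneg _)
    (prod_nonneg fun j _ => l2norm_nonneg _)

/-- The trace is the sum of the bilinear pairings `∑ₚ Xᵢ p Yᵢ p` of the rank-one terms, which
are bounded by `‖Xᵢ‖ ‖Yᵢ‖`. -/
lemma one_le_of_mem_nucCosts {A : (Fin d → Fin n) → (Fin d → Fin n) → ℂ} (htr : traceT A = 1)
    {r : ℝ} (hr : r ∈ nucCosts A) : 1 ≤ r := by
  obtain ⟨m, x, y, rfl, rfl⟩ := hr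
  calc (1 : ℝ) = ‖∑ i, ∑ p, pureTensor (x i) p * pureTensor (y i) p‖ := by
        rw [← norm_one (α := ℂ), ← htr, traceT, sum_comm]
        rfl
    _ ≤ ∑ i, ‖∑ p, pureTensor (x i) p * pureTensor (y i) p‖ := norm_sum_le _ _
    _ ≤ ∑ i, l2norm (pureTensor (x i)) * l2norm (pureTensor (y i)) :=
        sum_le_sum fun i _ => norm_sum_mul_le_l2norm_mul _ _
    _ = ∑ i, (∏ j, vnorm (x i j)) * (∏ j, vnorm (y i j)) := by
        simp only [l2norm_pureTensor, vnorm_eq_l2norm]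

lemma nucNorm2_eq_one_of_one_mem_nucCosts {A : (Fin d → Fin n) → (Fin d → Fin n) → ℂ}
    (htr : traceT A = 1) (h : 1 ∈ nucCosts A) : nucNorm2 A = 1 :=
  le_antisymm (csInf_le ⟨0, fun _ => nonneg_of_mem_nucCosts⟩ h)
    (le_csInf ⟨1, h⟩ fun _ => one_le_of_mem_nucCosts htr)

/-- The weight `pᵢ` of a separable decomposition is absorbed into the first factor. -/
lemma one_mem_nucCosts_of_separable (hd : 0 < d) {A : (Fin d → Fin n) → (Fin d → Fin n) → ℂ}
    (h : Separable A) : 1 ∈ nucCosts A := by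
  obtain ⟨r, p, x, hx, hp0, hp1, rfl⟩ := h
  set c : Fin r → Fin d → ℂ := fun i => Pi.mulSingle ⟨0, hd⟩ (p i : ℂ)
  refine ⟨r, fun i j => c i j • x i j, fun i j k => conj (x i j k),
    funext fun a => funext fun b => sum_congr rfl fun i _ => ?_, ?_⟩
  · change _ = pureTensor _ a * _
    rw [pureTensor_smul, Fintype.prod_pi_mulSingle', Pi.smul_apply, smul_eq_mul, mul_assoc]
    rfl
  · rw [← hp1]
    refine sum_congr rfl fun i _ => ?_
    have hscaled : ∀ j, vnorm (c i j • x i j) = ‖c i j‖ := fun j => by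
      rw [vnorm_eq_l2norm, l2norm_smul, ← vnorm_eq_l2norm, hx, mul_one]
    have hconj : ∀ j, vnorm (fun k => conj (x i j k)) = 1 := fun j => by
      rw [vnorm_eq_l2norm, l2norm_conj, ← vnorm_eq_l2norm, hx]
    simp only [hscaled, hconj, prod_const_one, mul_one, ← norm_prod, c,
      Fintype.prod_pi_mulSingle', Complex.norm_real, Real.norm_of_nonneg (hp0 i)]

end NuclearNorm

/-- Carathéodory: in dimension `D` every point of the hull is a convex combination of at most
`D + 1` points, so the hull is a finite union of continuous images of `stdSimplex × sᵏ`. -/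
theorem isCompact_convexHull {E : Type*} [NormedAddCommGroup E] [NormedSpace ℝ E]
    [FiniteDimensional ℝ E] {s : Set E} (hs : IsCompact s) : IsCompact (convexHull ℝ s) := by
  have hunion : convexHull ℝ s = ⋃ k : Fin (Module.finrank ℝ E + 2),
      (fun wz : (Fin k → ℝ) × (Fin k → E) => ∑ i, wz.1 i • wz.2 i) ''
        (stdSimplex ℝ (Fin k) ×ˢ Set.univ.pi fun _ => s) := by
    refine Set.Subset.antisymm (fun x hx => ?_) ?_
    · obtain ⟨ι, _, z, w, hzs, hind, hw, hw1, rfl⟩ := eq_pos_convex_span_of_mem_convexHull hx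
      have hcard : Fintype.card ι < Module.finrank ℝ E + 2 := by
        have := Submodule.finrank_le (vectorSpan ℝ (Set.range z))
        have := hind.card_le_finrank_succ
        omega
      let e := Fintype.equivFin ι
      refine Set.mem_iUnion.2 ⟨⟨_, hcard⟩, (w ∘ e.symm, z ∘ e.symm),
        ⟨⟨fun i => (hw _).le, ?_⟩, fun i _ => hzs (Set.mem_range_self _)⟩,
        e.symm.sum_comp fun i => w i • z i⟩
      exact (e.symm.sum_comp w).trans hw1
    · simp only [Set.iUnion_subset_iff, Set.image_subset_iff]
      rintro k ⟨w, z⟩ ⟨⟨hw0, hw1⟩, hz⟩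
      exact (convex_convexHull ℝ s).sum_mem (fun i _ => hw0 i) hw1
        fun i _ => subset_convexHull ℝ s (hz i (Set.mem_univ i))
  rw [hunion]
  exact isCompact_iUnion fun k =>
    ((isCompact_stdSimplex _ _).prod (isCompact_univ_pi fun _ => hs)).image (by fun_prop)

lemma isCompact_l2norm_le_one {κ : Type*} [Fintype κ] : IsCompact {v : κ → ℂ | l2norm v ≤ 1} :=
  Metric.isCompact_of_isClosed_isBounded (isClosed_le continuous_l2norm continuous_const)
    (Metric.isBounded_closedBall.subset fun v hv => mem_closedBall_zero_iff.2 <|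
      (pi_norm_le_iff_of_nonneg zero_le_one).2 fun i => (norm_le_l2norm v i).trans hv)

def productUnitBall (n d : ℕ) : Set ((Fin d → Fin n) → (Fin d → Fin n) → ℂ) :=
  {B | ∃ x y : Fin d → Fin n → ℂ, (∀ j, l2norm (x j) ≤ 1) ∧ (∀ j, l2norm (y j) ≤ 1) ∧
    B = fun a b => pureTensor x a * pureTensor y b}

lemma isCompact_productUnitBall (n d : ℕ) : IsCompact (productUnitBall n d) := by
  have hK := (isCompact_univ_pi fun _ : Fin d => isCompact_l2norm_le_one (κ := Fin n)).prod
    (isCompact_univ_pi fun _ : Fin d => isCompact_l2norm_le_one (κ := Fin n))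
  convert hK.image (f := fun xy a b => pureTensor xy.1 a * pureTensor xy.2 b)
    (by unfold pureTensor; fun_prop) using 1
  ext B
  simp only [productUnitBall, Set.mem_image, Set.mem_prod, Set.mem_pi, Set.mem_univ,
    forall_const, Prod.exists]
  constructor
  · rintro ⟨x, y, hx, hy, rfl⟩
    exact ⟨x, y, ⟨hx, hy⟩, rfl⟩
  · rintro ⟨x, y, ⟨hx, hy⟩, rfl⟩
    exact ⟨x, y, hx, hy, rfl⟩

lemma l2norm_inv_smul_self_le_one {κ : Type*} [Fintype κ] (x : κ → ℂ) :
    l2norm ((l2norm x : ℂ)⁻¹ • x) ≤ 1 := by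
  rw [l2norm_smul, norm_inv, Complex.norm_real, Real.norm_of_nonneg (l2norm_nonneg x)]
  exact inv_mul_le_one_of_le₀ le_rfl (l2norm_nonneg x)

lemma pureTensor_eq_smul_normalize {ι κ : Type*} [Fintype ι] [Fintype κ] (x : ι → κ → ℂ) :
    pureTensor x =
      ((∏ i, l2norm (x i) : ℝ) : ℂ) • pureTensor fun i => (l2norm (x i) : ℂ)⁻¹ • x i := by
  rw [Complex.ofReal_prod, ← pureTensor_smul]
  congr 1
  funext i
  rcases eq_or_ne (x i) 0 with h | h
  · simp [h]
  · rw [smul_smul, mul_inv_cancel₀ (Complex.ofReal_ne_zero.2 (l2norm_eq_zero.not.2 h)), one_smul]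

/-- Normalising the factors of each rank-one term writes `A` as a combination of points of the
product unit ball whose weights are the costs of the terms. -/
lemma inv_smul_mem_convexHull_productUnitBall {d n : ℕ}
    {A : (Fin d → Fin n) → (Fin d → Fin n) → ℂ} {r : ℝ} (hr : r ∈ nucCosts A) (hr0 : 0 < r) :
    r⁻¹ • A ∈ convexHull ℝ (productUnitBall n d) := by
  obtain ⟨m, x, y, rfl, rfl⟩ := hr
  set c : Fin m → ℝ := fun i => (∏ j, vnorm (x i j)) * ∏ j, vnorm (y i j)
  set U : Fin m → (Fin d → Fin n) → (Fin d → Fin n) → ℂ := fun i a b =>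
    pureTensor (fun j => (l2norm (x i j) : ℂ)⁻¹ • x i j) a *
      pureTensor (fun j => (l2norm (y i j) : ℂ)⁻¹ • y i j) b
  have hcU : (fun p q => ∑ i, (∏ j, x i j (p j)) * ∏ j, y i j (q j)) = ∑ i, c i • U i := by
    funext a b
    simp only [Finset.sum_apply, Pi.smul_apply, Complex.real_smul]
    refine sum_congr rfl fun i _ => ?_
    change pureTensor (x i) a * pureTensor (y i) b = _
    rw [pureTensor_eq_smul_normalize (x i), pureTensor_eq_smul_normalize (y i)]
    simp only [c, U, Pi.smul_apply, smul_eq_mul, vnorm_eq_l2norm, Complex.ofReal_mul]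
    ring
  have hmem := centerMass_mem_convexHull univ (s := productUnitBall n d) (w := c) (z := U)
    (fun i _ => mul_nonneg (prod_nonneg fun j _ => l2norm_nonneg _)
      (prod_nonneg fun j _ => l2norm_nonneg _)) hr0
    fun i _ => ⟨_, _, fun j => l2norm_inv_smul_self_le_one _,
      fun j => l2norm_inv_smul_self_le_one _, rfl⟩
  rwa [centerMass, ← hcU] at hmem

/-- `{t | t • A ∈ conv}` is closed and contains `r⁻¹` for costs `r ∈ [1, 1 + ε)`. -/
lemma mem_convexHull_productUnitBall_of_nucNorm2_eq_one {d n : ℕ}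
    {A : (Fin d → Fin n) → (Fin d → Fin n) → ℂ} (htr : traceT A = 1) (hnuc : nucNorm2 A = 1) :
    A ∈ convexHull ℝ (productUnitBall n d) := by
  have hclosed : IsClosed {t : ℝ | t • A ∈ convexHull ℝ (productUnitBall n d)} :=
    (isCompact_convexHull (isCompact_productUnitBall n d)).isClosed.preimage
      (continuous_id.smul continuous_const)
  have hne : (nucCosts A).Nonempty := by
    by_contra h
    rw [Set.not_nonempty_iff_eq_empty] at h
    rw [nucNorm2_eq_sInf_nucCosts, h, Real.sInf_empty] at hnuc
    exact zero_ne_one hnuc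
  suffices (1 : ℝ) ∈ closure {t : ℝ | t • A ∈ convexHull ℝ (productUnitBall n d)} by
    simpa using hclosed.closure_subset this
  refine Metric.mem_closure_iff.2 fun ε hε => ?_
  obtain ⟨r, hr, hlt⟩ := exists_lt_of_csInf_lt hne
    (show sInf (nucCosts A) < 1 + ε by rw [← nucNorm2_eq_sInf_nucCosts, hnuc]; linarith)
  have h1 := one_le_of_mem_nucCosts htr hr
  refine ⟨r⁻¹, inv_smul_mem_convexHull_productUnitBall hr (by linarith), ?_⟩
  calc dist 1 r⁻¹ = (r - 1) * r⁻¹ := by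
        rw [Real.dist_eq, abs_of_nonneg (sub_nonneg.2 (inv_le_one_of_one_le₀ h1))]
        field_simp
    _ ≤ r - 1 := mul_le_of_le_one_right (by linarith) (inv_le_one_of_one_le₀ h1)
    _ < ε := by linarith

section SymmetricDecomposition

variable {d n : ℕ} {A : (Fin d → Fin n) → (Fin d → Fin n) → ℂ}

lemma exists_decomp_of_mem_convexHull_productUnitBall
    (hA : A ∈ convexHull ℝ (productUnitBall n d)) :
    ∃ (r : ℕ) (w : Fin r → ℝ) (x y : Fin r → Fin d → Fin n → ℂ),
      (∀ i, 0 < w i) ∧ ∑ i, w i = 1 ∧ (∀ i j, l2norm (x i j) ≤ 1) ∧ (∀ i j, l2norm (y i j) ≤ 1) ∧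
      A = fun a b => ∑ i, (w i : ℂ) * (pureTensor (x i) a * pureTensor (y i) b) := by
  obtain ⟨ι, _, z, w, hz, -, hw, hw1, rfl⟩ := eq_pos_convex_span_of_mem_convexHull hA
  choose x y hx hy hxy using fun i => hz (Set.mem_range_self i)
  let e := (Fintype.equivFin ι).symm
  refine ⟨_, w ∘ e, x ∘ e, y ∘ e, fun i => hw _, (e.sum_comp w).trans hw1,
    fun i => hx _, fun i => hy _, ?_⟩
  funext a b
  rw [← e.sum_comp]
  simp only [Finset.sum_apply, Pi.smul_apply, hxy, Complex.real_smul, Function.comp_apply]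

/-- Bisymmetry gives `∑ₚ A (p ∘ σ) p = traceT A = 1` for every `σ`, so the pairing lemma
applies to `Xᵢ = (⊗ xᵢ) ∘ σ`. -/
lemma pureTensor_l2norm_eq_one_and_eq_conj_and_isSymT (hbi : IsBisymT A) (htr : traceT A = 1)
    {r : ℕ} {w : Fin r → ℝ} {x y : Fin r → Fin d → Fin n → ℂ} (hw : ∀ i, 0 < w i)
    (hw1 : ∑ i, w i = 1) (hx : ∀ i j, l2norm (x i j) ≤ 1) (hy : ∀ i j, l2norm (y i j) ≤ 1)
    (hA : A = fun a b => ∑ i, (w i : ℂ) * (pureTensor (x i) a * pureTensor (y i) b)) (i : Fin r) :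
    l2norm (pureTensor (x i)) = 1 ∧ pureTensor (y i) = (fun p => conj (pureTensor (x i) p)) ∧
      IsSymT (pureTensor (x i)) := by
  have hball : ∀ (z : Fin r → Fin d → Fin n → ℂ), (∀ i j, l2norm (z i j) ≤ 1) →
      ∀ i, l2norm (pureTensor (z i)) ≤ 1 := fun z hz i => by
    rw [l2norm_pureTensor]
    exact prod_le_one (fun j _ => l2norm_nonneg _) fun j _ => hz i j
  have htwist : ∀ σ : Equiv.Perm (Fin d), l2norm (pureTensor (x i)) = 1 ∧
      pureTensor (y i) = fun p => conj (pureTensor (x i) (p ∘ σ)) := fun σ => by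
    have hsum : ∑ k, (w k : ℂ) * ∑ p, pureTensor (x k) (p ∘ σ) * pureTensor (y k) p = 1 := by
      have htrace : ∑ p, A (p ∘ σ) p = 1 := by
        rw [← htr]
        exact sum_congr rfl fun p _ => hbi σ 1 p p
      rw [hA] at htrace
      simp only [mul_sum]
      rw [sum_comm]
      exact htrace
    have := l2norm_eq_one_and_eq_conj_of_sum_mul_dot_eq_one hw hw1
      (fun k => (l2norm_comp_perm _ σ).trans_le (hball x hx k)) (hball y hy) hsum i
    rwa [l2norm_comp_perm] at this
  obtain ⟨hnorm, hconj⟩ := htwist 1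
  refine ⟨hnorm, hconj, fun σ p => ?_⟩
  simpa using congrArg conj (congrFun ((htwist σ).2.symm.trans hconj) p)

def IsSymSeparable (A : (Fin d → Fin n) → (Fin d → Fin n) → ℂ) : Prop :=
  ∃ (r : ℕ) (p : Fin r → ℝ) (x : Fin r → Fin n → ℂ),
    (∀ i, vnorm (x i) = 1) ∧ (∀ i, 0 < p i) ∧ (∑ i, p i) = 1 ∧
    A = fun a b => ∑ i, (p i : ℂ) * ((∏ j, x i (a j)) * ∏ j, conj (x i (b j)))

lemma IsSymSeparable.separable (h : IsSymSeparable A) : Separable A :=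
  let ⟨r, p, x, hx, hp, hp1, hA⟩ := h
  ⟨r, p, fun i _ => x i, fun i _ => hx i, fun i => (hp i).le, hp1, hA⟩

lemma isSymSeparable_of_nucNorm2_eq_one (hd : 0 < d) (hbi : IsBisymT A) (htr : traceT A = 1)
    (hnuc : nucNorm2 A = 1) : IsSymSeparable A := by
  obtain ⟨r, w, x, y, hw, hw1, hx, hy, hA⟩ := exists_decomp_of_mem_convexHull_productUnitBall
    (mem_convexHull_productUnitBall_of_nucNorm2_eq_one htr hnuc)
  have hterm := pureTensor_l2norm_eq_one_and_eq_conj_and_isSymT hbi htr hw hw1 hx hy hA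
  choose u c hu hc using fun i => exists_eq_smul_pureTensor_const_of_isSymT hd (hterm i).2.2
    fun h => by simpa [h, l2norm] using (hterm i).1
  have hc1 : ∀ i, c i * conj (c i) = 1 := fun i => by
    have := (hterm i).1
    rw [hc i, l2norm_smul, l2norm_pureTensor, hu i, prod_const_one, mul_one] at this
    rw [Complex.mul_conj, Complex.normSq_eq_norm_sq, this, one_pow, Complex.ofReal_one]
  refine ⟨r, w, u, hu, hw, hw1, ?_⟩
  rw [hA]
  funext a b
  refine sum_congr rfl fun i _ => ?_
  rw [(hterm i).2.1, hc i]
  simp only [Pi.smul_apply, smul_eq_mul, map_mul, pureTensor, map_prod]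
  linear_combination (w i : ℂ) * (∏ j, u i (a j)) * (∏ j, conj (u i (b j))) * hc1 i

end SymmetricDecomposition

theorem stmt12_general (n d : ℕ) (hd : 2 ≤ d)
    (A : (Fin d → Fin n) → (Fin d → Fin n) → ℂ)
    (hbi : IsBisymT A) (hden : IsDensity A) :
    (Separable A ↔ nucNorm2 A = 1) ∧
    (nucNorm2 A = 1 ↔
      ∃ (r : ℕ) (p : Fin r → ℝ) (x : Fin r → Fin n → ℂ),
        (∀ i, vnorm (x i) = 1) ∧ (∀ i, 0 < p i) ∧ (∑ i, p i) = 1 ∧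
        A = fun a b => ∑ i, (p i : ℂ) *
          ((∏ j, x i (a j)) * ∏ j, (starRingEnd ℂ) (x i (b j)))) := by
  have hnuc_of_sep (h : Separable A) : nucNorm2 A = 1 :=
    nucNorm2_eq_one_of_one_mem_nucCosts hden.2 (one_mem_nucCosts_of_separable (by omega) h)
  have hsymm_of_nuc (h : nucNorm2 A = 1) : IsSymSeparable A :=
    isSymSeparable_of_nucNorm2_eq_one (by omega) hbi hden.2 h
  exact ⟨⟨hnuc_of_sep, fun h => (hsymm_of_nuc h).separable⟩,
    ⟨hsymm_of_nuc, fun h => hnuc_of_sep (IsSymSeparable.separable h)⟩⟩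

/-- For a hermitian bisymmetric density tensor `A` on `ℂ^n`, the
following are equivalent: `A` is separable; `‖A‖₁ = 1`; `A` has a separable decomposition
into symmetric pure product states `A = ∑ᵢ pᵢ (⊗^d xᵢ)⊗(⊗^d conj xᵢ)` with `pᵢ > 0`. -/
theorem stmt12 (n d : ℕ) (hn : 2 ≤ n) (hd : 2 ≤ d)
    (A : (Fin d → Fin n) → (Fin d → Fin n) → ℂ)
    (hherm : IsHermT A) (hbi : IsBisymT A) (hden : IsDensity A) :
    (Separable A ↔ nucNorm2 A = 1) ∧
    (nucNorm2 A = 1 ↔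
      ∃ (r : ℕ) (p : Fin r → ℝ) (x : Fin r → Fin n → ℂ),
        (∀ i, vnorm (x i) = 1) ∧ (∀ i, 0 < p i) ∧ (∑ i, p i) = 1 ∧
        A = fun a b => ∑ i, (p i : ℂ) *
          ((∏ j, x i (a j)) * ∏ j, (starRingEnd ℂ) (x i (b j)))) :=
  stmt12_general n d hd A hbi hden
end
end
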